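/- Let κ := √(2/π), and for N ≥ 2 define c_N := κ / (2 ln N)^{1/2}, a_N := 1/(2 ln N) − ln(c_N) / (2 (ln N)²), and for r ∈ ℝ set w_N(r) := r / (2 (ln N)²) + a_N. Then for every fixed r ∈ ℝ, lim_{N→∞} N · c_N · exp( −(1/2) · w_N(r)^{−1} ) = e^r, and consequently lim_{N→∞} (1 − c_N · exp( −(1/2) · w_N(r)^{−1} ))^N = exp(−exp(r)). -/

import Mathlib

open MeasureTheory ProbabilityTheory Filter Real Set
open scoped ENNReal

noncomputable section

/-- A standard one-dimensional Brownian motion started at `0`: a measurable process with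
continuous paths, `v 0 = 0`, Gaussian increments `v t - v s ~ N(0, t - s)` and independent
increments. -/
structure IsStdBM {Ω : Type*} [MeasureSpace Ω] (v : ℝ → Ω → ℝ) : Prop where
  meas : ∀ t : ℝ, Measurable (v t)
  init : ∀ ω, v 0 ω = 0
  cont : ∀ ω, Continuous fun t => v t ω
  incr_law : ∀ s t : ℝ, 0 ≤ s → s ≤ t →
    Measure.map (fun ω => v t ω - v s ω) ℙ = gaussianReal 0 (Real.toNNReal (t - s))
  indep_incr : ∀ (n : ℕ) (τ : Fin (n + 1) → ℝ), Monotone τ → 0 ≤ τ 0 →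
    iIndepFun
      (fun k : Fin n => fun ω => v (τ k.succ) ω - v (τ k.castSucc) ω) ℙ

/-- The processes `v i`, viewed as path-valued random variables, are independent. -/
def IndepProcs {Ω : Type*} [MeasureSpace Ω] {ι : Type*} (v : ι → ℝ → Ω → ℝ) : Prop :=
  iIndepFun (fun i => fun ω => fun t => v i t ω) ℙ

/-- `c_N = √(2/π) / (2 ln N)^{1/2}`. -/
def cSeq (N : ℕ) : ℝ := Real.sqrt (2 / π) / Real.sqrt (2 * Real.log N)

/-- The centering sequence `a_N = 1/(2 ln N) - ln c_N / (2 (ln N)²)`. -/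
def aSeq (N : ℕ) : ℝ := 1 / (2 * Real.log N) - Real.log (cSeq N) / (2 * (Real.log N) ^ 2)

/-- `w_N(r) = r / (2 (ln N)²) + a_N`. -/
def wSeq (N : ℕ) (r : ℝ) : ℝ := r / (2 * (Real.log N) ^ 2) + aSeq N

private lemma logpow_div (n : ℕ) : Tendsto (fun x : ℝ => Real.log x ^ n / x) atTop (nhds 0) := by
  simpa using Real.tendsto_pow_log_div_mul_add_atTop 1 0 n one_ne_zero

private lemma aux1 (c d : ℝ) : Tendsto (fun x : ℝ => (c + d * Real.log x) / x) atTop (nhds 0) := by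
  have h0 : Tendsto (fun x : ℝ => c * x⁻¹ + d * (Real.log x / x)) atTop (nhds (c * 0 + d * 0)) :=
    ((tendsto_inv_atTop_zero).const_mul c).add
      (((logpow_div 1).congr (by intro x; rw [pow_one])).const_mul d)
  rw [mul_zero, mul_zero, add_zero] at h0
  refine h0.congr' ?_
  filter_upwards [eventually_ne_atTop (0:ℝ)] with x hx
  field_simp

private lemma aux2 (c d : ℝ) :
    Tendsto (fun x : ℝ => (c + d * Real.log x) ^ 2 / x) atTop (nhds 0) := by
  have h0 : Tendsto (fun x : ℝ => c^2 * x⁻¹ + 2*c*d * (Real.log x / x) + d^2 * (Real.log x ^ 2 / x))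
      atTop (nhds (c^2 * 0 + 2*c*d * 0 + d^2 * 0)) :=
    (((tendsto_inv_atTop_zero).const_mul _).add
      (((logpow_div 1).congr (by intro x; rw [pow_one])).const_mul _)).add
      ((logpow_div 2).const_mul _)
  simp only [mul_zero, add_zero] at h0
  refine h0.congr' ?_
  filter_upwards [eventually_ne_atTop (0:ℝ)] with x hx
  field_simp
  ring

private lemma two_le_log_pos {N : ℕ} (hN : 2 ≤ N) : 0 < Real.log N := by
  apply Real.log_pos
  have : (2:ℝ) ≤ (N:ℝ) := by exact_mod_cast hN
  linarith

private lemma cSeq_pos {N : ℕ} (hN : 2 ≤ N) : 0 < cSeq N := by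
  have hL := two_le_log_pos hN
  exact div_pos (Real.sqrt_pos.2 (by positivity)) (Real.sqrt_pos.2 (by linarith))

/-- eventual formula for `r - log (cSeq N)` -/
private lemma ru_formula (r : ℝ) : ∀ᶠ N : ℕ in atTop,
    r - Real.log (cSeq N) =
      (r - Real.log (Real.sqrt (2 / π)) + (1/2) * Real.log 2)
        + (1/2) * Real.log (Real.log N) := by
  filter_upwards [eventually_ge_atTop 2] with N hN
  have hL := two_le_log_pos hN
  have hk : (0:ℝ) < Real.sqrt (2 / π) := Real.sqrt_pos.2 (by positivity)
  rw [cSeq, Real.log_div hk.ne' (Real.sqrt_pos.2 (by linarith)).ne',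
    Real.log_sqrt (show (0:ℝ) ≤ 2 * Real.log N by linarith),
    Real.log_mul two_ne_zero hL.ne']
  ring

/-- For every fixed `r`, `N · c_N · exp(-(1/2) w_N(r)⁻¹) → e^r` and consequently
`(1 - c_N exp(-(1/2) w_N(r)⁻¹))^N → exp(-exp r)` as `N → ∞`. -/
theorem stmt6 (r : ℝ) :
    Tendsto (fun N : ℕ => (N : ℝ) * cSeq N * Real.exp (-(1 / 2) * (wSeq N r)⁻¹))
      atTop (nhds (Real.exp r)) ∧
    Tendsto (fun N : ℕ => (1 - cSeq N * Real.exp (-(1 / 2) * (wSeq N r)⁻¹)) ^ N)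
      atTop (nhds (Real.exp (-Real.exp r))) := by
  set b : ℝ := r - Real.log (Real.sqrt (2 / π)) + (1/2) * Real.log 2 with hb
  have hlogN : Tendsto (fun N : ℕ => Real.log N) atTop atTop :=
    Real.tendsto_log_atTop.comp tendsto_natCast_atTop_atTop
  -- q N := (r - log c_N) / log N → 0
  have hq : Tendsto (fun N : ℕ => (r - Real.log (cSeq N)) / Real.log N) atTop (nhds 0) := by
    refine (((aux1 b (1/2)).comp hlogN).congr' ?_)
    filter_upwards [ru_formula r] with N h
    simp only [Function.comp]
    rw [h]
  -- s N := (r - log c_N)^2 / log N → 0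
  have hs : Tendsto (fun N : ℕ => (r - Real.log (cSeq N)) ^ 2 / Real.log N) atTop (nhds 0) := by
    refine (((aux2 b (1/2)).comp hlogN).congr' ?_)
    filter_upwards [ru_formula r] with N h
    simp only [Function.comp]
    rw [h]
  have h1q : Tendsto (fun N : ℕ => 1 + (r - Real.log (cSeq N)) / Real.log N) atTop (nhds 1) := by
    simpa using tendsto_const_nhds.add hq
  have hpos : ∀ᶠ N : ℕ in atTop, 0 < 1 + (r - Real.log (cSeq N)) / Real.log N :=
    h1q (lt_mem_nhds (by norm_num : (0:ℝ) < 1))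
  have hdiv : Tendsto (fun N : ℕ =>
      r - ((r - Real.log (cSeq N)) ^ 2 / Real.log N)
        / (1 + (r - Real.log (cSeq N)) / Real.log N)) atTop (nhds r) := by
    have h := Tendsto.sub (tendsto_const_nhds : Tendsto (fun _ : ℕ => r) atTop (nhds r))
      (hs.div h1q one_ne_zero)
    simpa using h
  -- Part 1
  have key : Tendsto (fun N : ℕ => (N : ℝ) * cSeq N * Real.exp (-(1 / 2) * (wSeq N r)⁻¹))
      atTop (nhds (Real.exp r)) := by
    refine ((Real.continuous_exp.tendsto r).comp hdiv).congr' ?_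
    filter_upwards [eventually_ge_atTop 2, hpos] with N hN hposN
    have hL := two_le_log_pos hN
    have hc := cSeq_pos hN
    set L : ℝ := Real.log N with hLdef
    set u : ℝ := Real.log (cSeq N) with hudef
    have hD : 0 < L + (r - u) := by
      have h := mul_pos hL hposN
      rwa [show L * (1 + (r - u) / L) = L + (r - u) by field_simp] at h
    have hw : wSeq N r = (L + (r - u)) / (2 * L ^ 2) := by
      rw [wSeq, aSeq, ← hLdef, ← hudef]
      field_simp
      ring
    have hN0 : (0:ℝ) < (N:ℝ) := by positivity
    simp only [Function.comp]
    rw [show ((N:ℝ)) = Real.exp L from (Real.exp_log hN0).symm,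
      show cSeq N = Real.exp u from (Real.exp_log hc).symm,
      ← Real.exp_add, ← Real.exp_add]
    congr 1
    simp only [Real.log_exp]
    rw [hw, inv_div]
    have h1 : 1 + (r - u) / L ≠ 0 := ne_of_gt hposN
    field_simp
    ring
  refine ⟨key, ?_⟩
  -- Part 2
  set x : ℕ → ℝ := fun N => cSeq N * Real.exp (-(1 / 2) * (wSeq N r)⁻¹) with hx
  have hx0 : Tendsto x atTop (nhds 0) := by
    have h := key.mul (tendsto_inv_atTop_zero.comp tendsto_natCast_atTop_atTop)
    rw [mul_zero] at h
    refine h.congr' ?_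
    filter_upwards [eventually_ge_atTop 1] with N hN
    have hN0 : ((N:ℝ)) ≠ 0 := by positivity
    simp only [Function.comp, hx]
    field_simp
  have hxpos : ∀ᶠ N : ℕ in atTop, 0 < x N := by
    filter_upwards [eventually_ge_atTop 2] with N hN
    exact mul_pos (cSeq_pos hN) (Real.exp_pos _)
  have hxlt : ∀ᶠ N : ℕ in atTop, x N < 1 :=
    hx0 (gt_mem_nhds (by norm_num : (0:ℝ) < 1))
  -- slope of log (1 - y) at 0
  have hderiv : HasDerivAt (fun y : ℝ => Real.log (1 - y)) (-1) 0 := by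
    have h1 : HasDerivAt (fun y : ℝ => 1 - y) (-1) 0 := by
      simpa using (hasDerivAt_id (0:ℝ)).const_sub 1
    have := (Real.hasDerivAt_log (by norm_num : (1:ℝ) - 0 ≠ 0)).comp 0 h1
    simpa [Function.comp_def] using this
  have hslope : Tendsto (fun y : ℝ => Real.log (1 - y) / y) (nhdsWithin 0 {0}ᶜ) (nhds (-1)) := by
    have h := hasDerivAt_iff_tendsto_slope.mp hderiv
    refine h.congr fun y => ?_
    simp [slope_def_field, div_eq_div_iff]
  have hxne : Tendsto x atTop (nhdsWithin 0 {0}ᶜ) := by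
    refine tendsto_nhdsWithin_of_tendsto_nhds_of_eventually_within _ hx0 ?_
    filter_upwards [hxpos] with N h
    exact ne_of_gt h
  have hNlog : Tendsto (fun N : ℕ => (N : ℝ) * Real.log (1 - x N)) atTop
      (nhds (Real.exp r * (-1))) := by
    have h := key.mul (hslope.comp hxne)
    refine h.congr' ?_
    filter_upwards [hxpos] with N hN
    have hxNe : x N ≠ 0 := ne_of_gt hN
    simp only [Function.comp]
    rw [show ((N:ℝ)) * cSeq N * Real.exp (-(1/2) * (wSeq N r)⁻¹) = (N:ℝ) * x N from by
      rw [hx]; ring, mul_assoc, mul_comm (x N) (Real.log (1 - x N) / x N),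
      div_mul_cancel₀ _ hxNe]
  have := (Real.continuous_exp.tendsto _).comp hNlog
  rw [mul_neg_one] at this
  refine this.congr' ?_
  filter_upwards [hxpos, hxlt] with N h0 h1
  simp only [Function.comp]
  rw [Real.exp_nat_mul, Real.exp_log (by linarith : (0:ℝ) < 1 - x N)]
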